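/- Let e = e₁, e₂, … be any infinite sequence of closed β-normal λ-terms, and define the numeral system c by c₀ = I and cₙ = <c_{n-1}, eₙ> for n ≥ 1. Then P_c = λn.(n T) is a Predecessor for c, i.e. (P_c c_{n+1}) ≃β cₙ for all n, and Z_c = λn.(n (λxλy.I) T F T) is a Zero Test for c, i.e. (Z_c c₀) ≃β T and (Z_c c_{n+1}) ≃β F for all n. -/

import Mathlib

/-- Untyped λ-terms in de Bruijn notation. -/
inductive Lam : Type
  | var : ℕ → Lam
  | app : Lam → Lam → Lam
  | lam : Lam → Lam
  deriving DecidableEq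

namespace Lam

/-- Shift by one the free variables with index ≥ `d`. -/
def lift (d : ℕ) : Lam → Lam
  | var n => if n < d then var n else var (n + 1)
  | app M N => app (lift d M) (lift d N)
  | lam M => lam (lift (d + 1) M)

/-- Capture-avoiding substitution of `N` for the free variable of index `n`. -/
def subst : Lam → ℕ → Lam → Lam
  | var m, n, N => if m = n then N else if n < m then var (m - 1) else var m
  | app M₁ M₂, n, N => app (subst M₁ n N) (subst M₂ n N)
  | lam M, n, N => lam (subst M (n + 1) (lift 0 N))

/-- One-step β-reduction (contraction of a β-redex anywhere in the term). -/
inductive Step : Lam → Lam → Prop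
  | beta (M N : Lam) : Step (app (lam M) N) (subst M 0 N)
  | appL {M M' : Lam} (N : Lam) : Step M M' → Step (app M N) (app M' N)
  | appR (M : Lam) {N N' : Lam} : Step N N' → Step (app M N) (app M N')
  | lam {M M' : Lam} : Step M M' → Step (Lam.lam M) (Lam.lam M')

/-- β-equivalence: the equivalence relation generated by one-step β-reduction. -/
def BetaEq : Lam → Lam → Prop := Relation.EqvGen Step

/-- The variable of index `n` occurs free in the term. -/
def HasFree : Lam → ℕ → Prop
  | var m, n => m = n
  | app M N, n => HasFree M n ∨ HasFree N n
  | lam M, n => HasFree M (n + 1)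

/-- A term is closed if it has no free variables. -/
def Closed (M : Lam) : Prop := ∀ n, ¬ HasFree M n

/-- A term is β-normal: it contains no β-redex. -/
def IsBetaNormal : Lam → Prop
  | app (lam _) _ => False
  | app M N => IsBetaNormal M ∧ IsBetaNormal N
  | lam M => IsBetaNormal M
  | var _ => True

/-- A term is βη-normal: it contains no β-redex and no η-redex
`λx.(M x)` with `x` not free in `M`. -/
def IsBetaEtaNormal : Lam → Prop
  | app (lam _) _ => False
  | app M N => IsBetaEtaNormal M ∧ IsBetaEtaNormal N
  | lam (app M (var 0)) => HasFree M 0 ∧ IsBetaEtaNormal (app M (var 0))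
  | lam M => IsBetaEtaNormal M
  | var _ => True

/-- `I = λx.x`. -/
def I : Lam := lam (var 0)

/-- `T = λxλy.x`. -/
def T : Lam := lam (lam (var 1))

/-- `F = λxλy.y`. -/
def F : Lam := lam (lam (var 0))

/-- The pair `<M,N> = λx.(x M N)` (the binder shifts the free variables of `M,N`). -/
def pair (M N : Lam) : Lam := lam (app (app (var 0) (lift 0 M)) (lift 0 N))

end Lam

/-- The numeral system `c` built on a sequence `e` (where `e i` codes the mathematical
`e_{i+1}`) : `c₀ = I` and `cₙ = <c_{n-1}, eₙ>` for `n ≥ 1`. -/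
def Lam.sysC (e : ℕ → Lam) : ℕ → Lam
  | 0 => Lam.I
  | n + 1 => Lam.pair (Lam.sysC e n) (e n)

/-!
Applying a pair projects it: `<M,N> f ↠ f M N`, because substituting into a lifted term
undoes the lift. Hence `P_c <M,N> ↠ T M N ↠ M`, while `Z_c I ↠ I (λxλy.I) T F T ↠ T` and
`Z_c <M,N> ↠ (λxλy.I) M N T F T ↠ I T F T ↠ F`.
-/

namespace Lam

theorem subst_lift (M N : Lam) (d : ℕ) : subst (lift d M) d N = M := by
  induction M generalizing d N with
  | var m =>
    unfold lift
    split_ifs with h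
    · simp [subst, h.ne, h.not_gt]
    · simp [subst, show m + 1 ≠ d by omega, show d < m + 1 by omega]
  | app A B ihA ihB => simp [lift, subst, ihA, ihB]
  | lam A ih => simp [lift, subst, ih]

theorem Step.beta_of_eq {M N P : Lam} (h : subst M 0 N = P) : Step (app (Lam.lam M) N) P :=
  h ▸ Step.beta M N

abbrev Reduces : Lam → Lam → Prop := Relation.ReflTransGen Step

local infix:50 " ↠ " => Reduces

theorem Reduces.app_left {M M' : Lam} (h : M ↠ M') (N : Lam) : app M N ↠ app M' N :=
  Relation.ReflTransGen.lift (app · N) (fun _ _ => Step.appL N) _ _ h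

theorem Reduces.betaEq {M N : Lam} (h : M ↠ N) : BetaEq M N :=
  Relation.EqvGen.reflTransGen_le_eqvGen Step _ _ h

theorem Step.pair_app (M N f : Lam) : Step (app (pair M N) f) (app (app f M) N) :=
  Step.beta_of_eq (by simp [subst, subst_lift])

theorem Step.I_app (M : Lam) : Step (app I M) M :=
  Step.beta_of_eq (by simp [subst])

theorem T_app_app (M N : Lam) : app (app T M) N ↠ M :=
  calc app (app T M) N
      ↠ app (lam (lift 0 M)) N := .single (.appL N (Step.beta_of_eq (by simp [subst])))
    _ ↠ M := .single (Step.beta_of_eq (subst_lift M N 0))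

theorem lam_lam_I_app_app (M N : Lam) : app (app (lam (lam I)) M) N ↠ I :=
  calc app (app (lam (lam I)) M) N
      ↠ app (lam I) N := .single (.appL N (Step.beta_of_eq (by simp [subst, I])))
    _ ↠ I := .single (Step.beta_of_eq (by simp [subst, I]))

/-- `P_c = λn.(n T)`. -/
def pred : Lam := lam (app (var 0) T)

/-- `Z_c = λn.(n (λxλy.I) T F T)`. -/
def zeroTest : Lam := lam (app (app (app (app (var 0) (lam (lam I))) T) F) T)

theorem closed_pred : Closed pred := by
  simp [Closed, pred, HasFree, T]

theorem closed_zeroTest : Closed zeroTest := by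
  simp [Closed, zeroTest, HasFree, T, F, I]

theorem pred_pair (M N : Lam) : app pred (pair M N) ↠ M :=
  calc app pred (pair M N)
      ↠ app (pair M N) T := .single (Step.beta_of_eq (by simp [subst, T]))
    _ ↠ app (app T M) N := .single (Step.pair_app M N T)
    _ ↠ M := T_app_app M N

theorem zeroTest_I : app zeroTest I ↠ T :=
  calc app zeroTest I
      ↠ app (app (app (app I (lam (lam I))) T) F) T :=
        .single (Step.beta_of_eq (by simp [subst, T, F, I]))
    _ ↠ app (app (app (lam (lam I)) T) F) T := .single (.appL _ (.appL _ (.appL _ (Step.I_app _))))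
    _ ↠ app I T := (lam_lam_I_app_app T F).app_left T
    _ ↠ T := .single (Step.I_app T)

theorem zeroTest_pair (M N : Lam) : app zeroTest (pair M N) ↠ F :=
  calc app zeroTest (pair M N)
      ↠ app (app (app (app (pair M N) (lam (lam I))) T) F) T :=
        .single (Step.beta_of_eq (by simp [subst, T, F, I]))
    _ ↠ app (app (app (app (app (lam (lam I)) M) N) T) F) T :=
        .single (.appL _ (.appL _ (.appL _ (Step.pair_app M N _))))
    _ ↠ app (app (app I T) F) T := (((lam_lam_I_app_app M N).app_left T).app_left F).app_left T
    _ ↠ app (app T F) T := .single (.appL _ (.appL _ (Step.I_app T)))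
    _ ↠ F := T_app_app F T

end Lam

theorem statement11_general (e : ℕ → Lam) :
    (Lam.Closed (Lam.lam (Lam.app (Lam.var 0) Lam.T)) ∧
      ∀ n, Lam.BetaEq (Lam.app (Lam.lam (Lam.app (Lam.var 0) Lam.T)) (Lam.sysC e (n + 1)))
        (Lam.sysC e n)) ∧
    (Lam.Closed (Lam.lam (Lam.app (Lam.app (Lam.app (Lam.app (Lam.var 0) (Lam.lam (Lam.lam Lam.I))) Lam.T) Lam.F) Lam.T)) ∧
      Lam.BetaEq (Lam.app (Lam.lam (Lam.app (Lam.app (Lam.app (Lam.app (Lam.var 0) (Lam.lam (Lam.lam Lam.I))) Lam.T) Lam.F) Lam.T)) (Lam.sysC e 0)) Lam.T ∧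
      ∀ n, Lam.BetaEq (Lam.app (Lam.lam (Lam.app (Lam.app (Lam.app (Lam.app (Lam.var 0) (Lam.lam (Lam.lam Lam.I))) Lam.T) Lam.F) Lam.T)) (Lam.sysC e (n + 1))) Lam.F) :=
  ⟨⟨Lam.closed_pred, fun n => (Lam.pred_pair (Lam.sysC e n) (e n)).betaEq⟩, Lam.closed_zeroTest,
    Lam.zeroTest_I.betaEq, fun n => (Lam.zeroTest_pair (Lam.sysC e n) (e n)).betaEq⟩

/-- For any infinite sequence `e` of closed β-normal λ-terms and the numeral system `c`
(`c₀ = I`, `cₙ = <c_{n-1}, eₙ>`), the closed term `P_c = λn.(n T)` is a Predecessor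
for `c` and the closed term `Z_c = λn.(n (λxλy.I) T F T)` is a Zero Test for `c`. -/
theorem statement11 (e : ℕ → Lam)
    (he : ∀ i, Lam.Closed (e i) ∧ Lam.IsBetaNormal (e i)) :
    (Lam.Closed (Lam.lam (Lam.app (Lam.var 0) Lam.T)) ∧
      ∀ n, Lam.BetaEq (Lam.app (Lam.lam (Lam.app (Lam.var 0) Lam.T)) (Lam.sysC e (n + 1)))
        (Lam.sysC e n)) ∧
    (Lam.Closed (Lam.lam (Lam.app (Lam.app (Lam.app (Lam.app (Lam.var 0) (Lam.lam (Lam.lam Lam.I))) Lam.T) Lam.F) Lam.T)) ∧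
      Lam.BetaEq (Lam.app (Lam.lam (Lam.app (Lam.app (Lam.app (Lam.app (Lam.var 0) (Lam.lam (Lam.lam Lam.I))) Lam.T) Lam.F) Lam.T)) (Lam.sysC e 0)) Lam.T ∧
      ∀ n, Lam.BetaEq (Lam.app (Lam.lam (Lam.app (Lam.app (Lam.app (Lam.app (Lam.var 0) (Lam.lam (Lam.lam Lam.I))) Lam.T) Lam.F) Lam.T)) (Lam.sysC e (n + 1))) Lam.F) :=
  statement11_general e
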